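/- arXiv:2305.04767 — 2 statements merged into one kernel-verified Lean document; each statement's English description precedes it below -/
import Mathlib

section
/- Let S be a colorful graph and let e* ∈ E(S) be any edge. Then there is no color-preserving homomorphism from S to the CFI graph Γ(S, χ_{e*}), i.e., hom(S, Γ(S, χ_{e*})) = 0. -/
open SimpleGraph

/-- Color-preserving homomorphism count between colored graphs. -/
noncomputable def cpHomCount {VH VG C : Type} (H : SimpleGraph VH) (cH : VH → C)
    (G : SimpleGraph VG) (cG : VG → C) : ℕ :=
  Nat.card {f : H →g G // ∀ v, cG (f v) = cH v}

variable {V : Type} [Fintype V] [DecidableEq V]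

/-- Vertices of the CFI graph over a colorful graph `S`: pairs of a color `v ∈ V(S)`
and an even assignment on the edges incident to `v` (encoded as a function on all of
`Sym2 V` supported on the incidence set of `v`). -/
def CFIVert (S : SimpleGraph V) : Type :=
  Σ v : V, {a : Sym2 V → ZMod 2 //
    (∀ e, a e ≠ 0 → e ∈ S.incidenceSet v) ∧ ∑ e : Sym2 V, a e = 0}

/-- The CFI graph of a colorful graph `S` with charge function `c`: vertices
`(u, a_u)` and `(v, a_v)` are adjacent iff `uv ∈ E(S)` and
`a_u(uv) + a_v(uv) = c(uv)`.  Its coloring is `Sigma.fst : CFIVert S → V`. -/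
def CFI (S : SimpleGraph V) (c : Sym2 V → ZMod 2) : SimpleGraph (CFIVert S) where
  Adj x y := S.Adj x.1 y.1 ∧ x.2.1 s(x.1, y.1) + y.2.1 s(x.1, y.1) = c s(x.1, y.1)
  symm := ⟨by
    rintro ⟨u, a⟩ ⟨v, b⟩ ⟨hadj, hsum⟩
    refine ⟨hadj.symm, ?_⟩
    simp only [Sym2.eq_swap (a := v) (b := u)]
    rw [add_comm]; exact hsum⟩
  loopless := ⟨fun x h => S.irrefl h.1⟩

/-! A color-preserving homomorphism `f : S → Γ(S, c)` picks at every vertex `v` an even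
assignment `a_v` on the edges at `v`. Summing all these assignments gives `0`; summing them
edge by edge instead gives, on each edge `uv`, `a_u(uv) + a_v(uv) = c(uv)`. Hence the total
charge `∑_{e ∈ E(S)} c(e)` vanishes in `ZMod 2`, whereas `χ_{e*}` has total charge `1`. -/

section DoubleCounting

variable {W M : Type*} [Fintype W] [AddCommMonoid M] {S : SimpleGraph W} {a : W → Sym2 W → M}

theorem sum_apply_eq_zero_of_notMem_edgeSet
    (hsupp : ∀ v e, a v e ≠ 0 → e ∈ S.incidenceSet v) {e : Sym2 W} (he : e ∉ S.edgeSet) :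
    ∑ v, a v e = 0 :=
  Finset.sum_eq_zero fun v _ => by_contra fun h => he (hsupp v e h).1

theorem sum_apply_eq_add_of_adj
    (hsupp : ∀ v e, a v e ≠ 0 → e ∈ S.incidenceSet v) {u v : W} (huv : S.Adj u v) :
    ∑ w, a w s(u, v) = a u s(u, v) + a v s(u, v) := by
  refine Fintype.sum_eq_add u v huv.ne fun w ⟨hwu, hwv⟩ => by_contra fun h => ?_
  rcases Sym2.mem_iff.mp (hsupp w _ h).2 with rfl | rfl
  exacts [hwu rfl, hwv rfl]

theorem sum_sum_eq_sum_edgeFinset [DecidableEq W] [DecidableRel S.Adj] (c : Sym2 W → M)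
    (hsupp : ∀ v e, a v e ≠ 0 → e ∈ S.incidenceSet v)
    (hedge : ∀ u v, S.Adj u v → a u s(u, v) + a v s(u, v) = c s(u, v)) :
    ∑ v, ∑ e, a v e = ∑ e ∈ S.edgeFinset, c e := by
  rw [Finset.sum_comm, ← Finset.sum_subset (Finset.subset_univ S.edgeFinset)
    fun e _ he => sum_apply_eq_zero_of_notMem_edgeSet hsupp (by simpa using he)]
  refine Finset.sum_congr rfl fun e he => ?_
  induction e using Sym2.ind with
  | _ u v =>
    have huv : S.Adj u v := by simpa using he
    rw [sum_apply_eq_add_of_adj hsupp huv, hedge u v huv]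

end DoubleCounting

theorem CFI.sum_charge_eq_zero_of_hom (S : SimpleGraph V) [DecidableRel S.Adj]
    {c : Sym2 V → ZMod 2} (f : S →g CFI S c) (hf : ∀ v, (f v).1 = v) :
    ∑ e ∈ S.edgeFinset, c e = 0 := by
  have hsupp : ∀ v e, (f v).2.1 e ≠ 0 → e ∈ S.incidenceSet v := fun v e h => by
    simpa [hf v] using (f v).2.2.1 e h
  have hedge : ∀ u v, S.Adj u v →
      (f u).2.1 s(u, v) + (f v).2.1 s(u, v) = c s(u, v) := fun u v huv => by
    simpa [hf u, hf v] using (f.map_rel huv).2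
  rw [← sum_sum_eq_sum_edgeFinset c hsupp hedge]
  exact Finset.sum_eq_zero fun v _ => (f v).2.2.2

/-- For a colorful graph `S` and any edge `e* ∈ E(S)`, there is no color-preserving
homomorphism from `S` into the CFI graph `Γ(S, χ_{e*})` with unit charge on `e*`:
`hom(S, Γ(S, χ_{e*})) = 0`. -/
theorem cpHomCount_CFI_single_charge_eq_zero
    (S : SimpleGraph V) [DecidableRel S.Adj]
    (estar : Sym2 V) (he : estar ∈ S.edgeSet) :
    cpHomCount S id (CFI S (fun e => if e = estar then 1 else 0)) Sigma.fst = 0 := by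
  refine Nat.card_eq_zero.mpr (Or.inl ⟨fun ⟨f, hf⟩ => ?_⟩)
  have htotal := CFI.sum_charge_eq_zero_of_hom S f hf
  rw [Finset.sum_ite_eq', if_pos (S.mem_edgeFinset.mpr he)] at htotal
  exact one_ne_zero htotal
end

section
/- Let S be a connected colorful graph, let e* ∈ E(S), and let S' be a proper edge-subgraph of S, i.e., a colorful graph with vertex set V(S) and edge set E(S') ⊊ E(S). For a charge function c, let Γ(S,c) ⊗ S' denote the colored graph obtained from the CFI graph Γ(S,c) by deleting every edge between vertices (u, a_u) and (v, a_v) whose color pair uv is not an edge of S'. Then there is a color-preserving isomorphism between Γ(S, χ_{e*}) ⊗ S' and Γ(S, χ_∅) ⊗ S'. -/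
open SimpleGraph

variable {V : Type} [Fintype V] [DecidableEq V]

/-- The restriction `Γ(S,c) ⊗ S'` of the CFI graph to the edge-colors of a
subgraph `S'`: edges of `Γ(S,c)` whose color pair is not an edge of `S'` are
deleted. -/
def CFIRestrict (S : SimpleGraph V) (c : Sym2 V → ZMod 2) (S' : SimpleGraph V) :
    SimpleGraph (CFIVert S) where
  Adj x y := (CFI S c).Adj x y ∧ S'.Adj x.1 y.1
  symm := ⟨fun _ _ h => ⟨h.1.symm, h.2.symm⟩⟩
  loopless := ⟨fun x h => (CFI S c).irrefl h.1⟩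

/-!
Relabelling every vertex `(v, a)` of a CFI graph to `(v, a + t v)`, for a family `t` of even
assignments, turns charge `c` into `c + δt` with `(δt)(uv) = t u (uv) + t v (uv)`. Adding at a
vertex `y` the assignment that is `1` on two edges at `y` moves a unit charge from one of these
edges to the other, so along a walk in the connected graph `S` the charge `χ_{e*}` can be moved
onto any edge `f`. Choosing `f ∈ E(S) \ E(S')` makes it vanish on `S'`.
-/

namespace CFIVert

variable {S : SimpleGraph V}

/-- The predicate cutting out the labels of color `v` in `CFIVert S`. -/
def IsLabel (S : SimpleGraph V) (v : V) (a : Sym2 V → ZMod 2) : Prop :=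
  (∀ e, a e ≠ 0 → e ∈ S.incidenceSet v) ∧ ∑ e, a e = 0

omit [DecidableEq V] in
lemma IsLabel.zero (v : V) : IsLabel S v 0 :=
  ⟨fun _ h => absurd rfl h, Finset.sum_const_zero⟩

omit [DecidableEq V] in
lemma IsLabel.add {v : V} {a b : Sym2 V → ZMod 2} (ha : IsLabel S v a) (hb : IsLabel S v b) :
    IsLabel S v (a + b) := by
  refine ⟨fun e h => ?_, by simp only [Pi.add_apply, Finset.sum_add_distrib, ha.2, hb.2,
    add_zero]⟩
  by_cases hae : a e = 0
  · exact hb.1 e (by simpa [hae] using h)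
  · exact ha.1 e hae

lemma isLabel_single_add_single {y : V} {e e' : Sym2 V} (he : e ∈ S.incidenceSet y)
    (he' : e' ∈ S.incidenceSet y) : IsLabel S y (Pi.single e 1 + Pi.single e' 1) := by
  refine ⟨fun g h => ?_, ?_⟩
  · by_cases hg : g = e
    · exact hg ▸ he
    · by_cases hg' : g = e'
      · exact hg' ▸ he'
      · simp [hg, hg'] at h
  · simp only [Pi.add_apply, Finset.sum_add_distrib, Fintype.sum_pi_single']
    decide

def IsTwist (S : SimpleGraph V) (t : V → Sym2 V → ZMod 2) : Prop :=
  ∀ v, IsLabel S v (t v)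

omit [DecidableEq V] in
lemma IsTwist.add {t t' : V → Sym2 V → ZMod 2} (ht : IsTwist S t) (ht' : IsTwist S t') :
    IsTwist S (t + t') :=
  fun v => (ht v).add (ht' v)

lemma isTwist_single {y : V} {d : Sym2 V → ZMod 2} (hd : IsLabel S y d) :
    IsTwist S (Pi.single y d) := by
  intro v
  by_cases hv : v = y
  · subst hv
    simpa using hd
  · simpa [Pi.single_apply, hv] using IsLabel.zero v

/-- Relabelling by the twist `t` turns the charge `c` into `c'` on the edges of `G`. -/
def ShiftsCharge (G : SimpleGraph V) (t : V → Sym2 V → ZMod 2) (c c' : Sym2 V → ZMod 2) :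
    Prop :=
  ∀ u v, G.Adj u v → t u s(u, v) + t v s(u, v) = c s(u, v) + c' s(u, v)

omit [Fintype V] [DecidableEq V] in
lemma ShiftsCharge.mono {G G' : SimpleGraph V} {t : V → Sym2 V → ZMod 2}
    {c c' : Sym2 V → ZMod 2} (h : ShiftsCharge G t c c') (hG : G' ≤ G) :
    ShiftsCharge G' t c c' :=
  fun u v huv => h u v (hG huv)

omit [Fintype V] [DecidableEq V] in
lemma ShiftsCharge.congr {G : SimpleGraph V} {t : V → Sym2 V → ZMod 2}
    {c₁ c₂ c₁' c₂' : Sym2 V → ZMod 2} (h : ShiftsCharge G t c₁ c₂)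
    (h₁ : ∀ e ∈ G.edgeSet, c₁ e = c₁' e) (h₂ : ∀ e ∈ G.edgeSet, c₂ e = c₂' e) :
    ShiftsCharge G t c₁' c₂' := by
  intro u v huv
  rw [← h₁ _ huv, ← h₂ _ huv]
  exact h u v huv

omit [Fintype V] [DecidableEq V] in
lemma ShiftsCharge.add {G : SimpleGraph V} {t t' : V → Sym2 V → ZMod 2}
    {c c' c'' : Sym2 V → ZMod 2} (h : ShiftsCharge G t c c') (h' : ShiftsCharge G t' c' c'') :
    ShiftsCharge G (t + t') c c'' := by
  intro u v huv
  have key : ∀ a b a' b' x y z : ZMod 2, a + b = x + y → a' + b' = y + z →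
      (a + a') + (b + b') = x + z := by decide
  exact key _ _ _ _ _ _ _ (h u v huv) (h' u v huv)

lemma shiftsCharge_single {G : SimpleGraph V} {y : V} {c c' : Sym2 V → ZMod 2}
    (hd : IsLabel S y (c + c')) : ShiftsCharge G (Pi.single y (c + c')) c c' := by
  intro u v huv
  have hy : ∀ e, (c + c') e ≠ 0 → y ∈ e := fun e he => (hd.1 e he).2
  by_cases hu : u = y
  · subst hu
    simp [huv.ne.symm]
  by_cases hv : v = y
  · subst hv
    simp [hu]
  · have hyuv : y ∉ s(u, v) := by simp [Ne.symm hu, Ne.symm hv]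
    have hzero : (c + c') s(u, v) = 0 := by_contra fun h => hyuv (hy _ h)
    simpa [hu, hv] using hzero.symm

lemma exists_twist_of_walk {y p : V} (w : S.Walk y p) {e e' : Sym2 V}
    (he : e ∈ S.incidenceSet y) (he' : e' ∈ S.incidenceSet p) :
    ∃ t, IsTwist S t ∧ ShiftsCharge S t (Pi.single e 1) (Pi.single e' 1) := by
  induction w generalizing e with
  | nil =>
    have hd := isLabel_single_add_single he he'
    exact ⟨_, isTwist_single hd, shiftsCharge_single hd⟩
  | @cons y z p hyz w ih =>
    have hd := isLabel_single_add_single he ⟨S.mem_edgeSet.2 hyz, Sym2.mem_mk_left y z⟩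
    obtain ⟨t, ht, hshift⟩ := ih ⟨S.mem_edgeSet.2 hyz, Sym2.mem_mk_right y z⟩ he'
    exact ⟨_, (isTwist_single hd).add ht, (shiftsCharge_single hd).add hshift⟩

lemma _root_.SimpleGraph.Connected.exists_twist (hS : S.Connected) {e e' : Sym2 V}
    (he : e ∈ S.edgeSet) (he' : e' ∈ S.edgeSet) :
    ∃ t, IsTwist S t ∧ ShiftsCharge S t (Pi.single e 1) (Pi.single e' 1) := by
  induction e using Sym2.ind with
  | _ y z =>
  induction e' using Sym2.ind with
  | _ p q =>
  exact exists_twist_of_walk (hS.preconnected y p).some ⟨he, Sym2.mem_mk_left y z⟩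
    ⟨he', Sym2.mem_mk_left p q⟩

def shift {t : V → Sym2 V → ZMod 2} (ht : IsTwist S t) (x : CFIVert S) : CFIVert S :=
  ⟨x.1, x.2.1 + t x.1, IsLabel.add x.2.2 (ht x.1)⟩

omit [DecidableEq V] in
lemma shift_shift {t : V → Sym2 V → ZMod 2} (ht : IsTwist S t) (x : CFIVert S) :
    shift ht (shift ht x) = x := by
  obtain ⟨v, a, ha⟩ := x
  simp only [shift, add_assoc, ZModModule.add_self, add_zero]
  rfl

def restrictIsoOfShiftsCharge {t : V → Sym2 V → ZMod 2} {c c' : Sym2 V → ZMod 2}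
    {S' : SimpleGraph V} (ht : IsTwist S t) (hshift : ShiftsCharge S' t c c') :
    CFIRestrict S c S' ≃g CFIRestrict S c' S' where
  toFun := shift ht
  invFun := shift ht
  left_inv := shift_shift ht
  right_inv := shift_shift ht
  map_rel_iff' {x y} := by
    have key : ∀ a b s r q q' : ZMod 2, s + r = q + q' →
        ((a + s) + (b + r) = q' ↔ a + b = q) := by
      decide
    exact and_congr_left fun hS' => and_congr_right fun _ => key _ _ _ _ _ _ (hshift _ _ hS')

end CFIVert

open CFIVert in
theorem CFI_restrict_iso_general
    (S : SimpleGraph V) (hconn : S.Connected)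
    (estar : Sym2 V) (he : estar ∈ S.edgeSet)
    (S' : SimpleGraph V) (hS' : S' < S) :
    ∃ φ : CFIRestrict S (fun e => if e = estar then 1 else 0) S' ≃g
        CFIRestrict S (fun _ => 0) S',
      ∀ x : CFIVert S, (φ x).1 = x.1 := by
  obtain ⟨f, hfS, hfS'⟩ := Set.exists_of_ssubset (edgeSet_ssubset_edgeSet.2 hS')
  obtain ⟨t, ht, hshift⟩ := hconn.exists_twist he hfS
  have hshift' : ShiftsCharge S' t (fun e => if e = estar then 1 else 0) (fun _ => 0) :=
    (hshift.mono hS'.le).congr (fun e _ => Pi.single_apply estar 1 e)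
      (fun e he => Pi.single_eq_of_ne (ne_of_mem_of_not_mem he hfS') 1)
  exact ⟨restrictIsoOfShiftsCharge ht hshift', fun _ => rfl⟩

/-- For a connected colorful graph `S`, an edge `e* ∈ E(S)` and a proper
edge-subgraph `S' < S`, the restrictions `Γ(S, χ_{e*}) ⊗ S'` and `Γ(S, χ_∅) ⊗ S'`
are color-isomorphic, via an isomorphism preserving the coloring `Sigma.fst`. -/
theorem CFI_restrict_iso
    (S : SimpleGraph V) [DecidableRel S.Adj] (hconn : S.Connected)
    (estar : Sym2 V) (he : estar ∈ S.edgeSet)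
    (S' : SimpleGraph V) (hS' : S' < S) :
    ∃ φ : CFIRestrict S (fun e => if e = estar then 1 else 0) S' ≃g
        CFIRestrict S (fun _ => 0) S',
      ∀ x : CFIVert S, (φ x).1 = x.1 :=
  CFI_restrict_iso_general S hconn estar he S' hS'
end
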